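/- Let N > 2s with s ∈ (0,1), and let g : ℝ → ℝ satisfy (g1), (g2) with constant m > 0, and (g3). Define, for t ≥ 0, g₁(t) = max(g(t)+mt, 0) and g₂(t) = g₁(t) − g(t), extended oddly to t < 0, and set G_i(t) = ∫₀ᵗ g_i(τ) dτ for i = 1,2. Then for every ε > 0 there exists C_ε > 0 such that G₁(t) ≤ C_ε |t|^{2*_s} + ε G₂(t) for all t ∈ ℝ. -/

import Mathlib

open MeasureTheory Filter Topology Set

noncomputable def gOne (g : ℝ → ℝ) (m : ℝ) (t : ℝ) : ℝ :=
  if 0 ≤ t then max (g t + m * t) 0 else -(max (g (-t) + m * (-t)) 0)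

/-- `g₂ = g₁ − g` (which is the odd extension of `g₁(t) − g(t)`, `t ≥ 0`, since `g` is odd). -/
noncomputable def gTwo (g : ℝ → ℝ) (m : ℝ) (t : ℝ) : ℝ := gOne g m t - g t

/-!
Write `p = 2*_s ≥ 2`. Since `g₂(t) ≥ m t` for `t ≥ 0`, it suffices to bound `g₁` pointwise by
`ε g₂ + K t^{p-1}` on `[0, ∞)` and integrate. Near `0`, (g2) gives `g(t) + m t ≤ ε m t`, hence
`g₁(t) ≤ ε m t ≤ ε g₂(t)`. On `[t₀, ∞)`, (g3) gives `g₁(t) ≤ |g(t)| + m t = O(t^{p-1})` at infinity,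
and continuity of `g₁ / t^{p-1}` on the compact part bounds the rest. Both primitives are even,
which settles `t < 0`.
-/

lemma intervalIntegral_zero_neg_of_odd {E : Type*} [NormedAddCommGroup E] [NormedSpace ℝ E]
    {f : ℝ → E} (hf : ∀ t, f (-t) = -f t) (t : ℝ) :
    ∫ τ in (0:ℝ)..-t, f τ = ∫ τ in (0:ℝ)..t, f τ := by
  have h := intervalIntegral.integral_comp_neg (a := (0:ℝ)) (b := t) f
  simp only [hf, intervalIntegral.integral_neg, neg_zero] at h
  rw [intervalIntegral.integral_symm, ← h, neg_neg]

lemma exists_forall_ge_le_mul_rpow_of_eventually_le {f : ℝ → ℝ} {a c q : ℝ} (ha : 0 < a)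
    (hf : ContinuousOn f (Ici a)) (hev : ∀ᶠ x in atTop, f x ≤ c * x ^ q) :
    ∃ K > 0, ∀ x ≥ a, f x ≤ K * x ^ q := by
  obtain ⟨T, hT⟩ := eventually_atTop.1 hev
  have hpos : ∀ x ≥ a, 0 < x ^ q := fun x hx => Real.rpow_pos_of_pos (ha.trans_le hx) q
  have hcont : ContinuousOn (fun x => f x / x ^ q) (Icc a T) :=
    (hf.mono Icc_subset_Ici_self).div
      (continuousOn_id.rpow_const fun x hx => Or.inl (ha.trans_le hx.1).ne')
      fun x hx => (hpos x hx.1).ne'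
  obtain ⟨M, hM⟩ := isCompact_Icc.bddAbove_image hcont
  refine ⟨max (max c M) 1, by positivity, fun x hx => ?_⟩
  have hxq := hpos x hx
  rcases le_total x T with hxT | hTx
  · have : f x / x ^ q ≤ M := hM ⟨x, ⟨hx, hxT⟩, rfl⟩
    rw [div_le_iff₀ hxq] at this
    nlinarith [le_max_right c M, le_max_left (max c M) 1]
  · nlinarith [hT x hTx, le_max_left c M, le_max_left (max c M) 1]

section
variable {g : ℝ → ℝ} {m : ℝ}

lemma gOne_of_nonneg {t : ℝ} (ht : 0 ≤ t) : gOne g m t = max (g t + m * t) 0 := if_pos ht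

lemma mul_le_gTwo {t : ℝ} (ht : 0 ≤ t) : m * t ≤ gTwo g m t := by
  rw [gTwo, gOne_of_nonneg ht]
  linarith [le_max_left (g t + m * t) 0]

lemma gOne_le_abs_add (hm : 0 ≤ m) {t : ℝ} (ht : 0 ≤ t) : gOne g m t ≤ |g t| + m * t := by
  rw [gOne_of_nonneg ht]
  exact max_le (by linarith [le_abs_self (g t)]) (by positivity)

lemma gOne_le_mul_gTwo (hm : 0 ≤ m) {ε t : ℝ} (ht : 0 ≤ t) (hε : 0 ≤ ε)
    (h : g t + m * t ≤ ε * (m * t)) : gOne g m t ≤ ε * gTwo g m t := by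
  have hmt : ε * (m * t) ≤ ε * gTwo g m t := mul_le_mul_of_nonneg_left (mul_le_gTwo ht) hε
  rw [gOne_of_nonneg ht]
  exact max_le (h.trans hmt) ((by positivity : 0 ≤ ε * (m * t)).trans hmt)

lemma gOne_neg (hodd : ∀ t, g (-t) = -g t) (t : ℝ) : gOne g m (-t) = -gOne g m t := by
  have hg0 : g 0 = 0 := self_eq_neg.1 (by simpa using hodd 0)
  rcases lt_trichotomy t 0 with h | rfl | h
  · rw [gOne, if_pos (by linarith), gOne, if_neg (not_le.2 h), neg_neg]
  · simp [gOne, hg0]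
  · rw [gOne, if_neg (by linarith), neg_neg, gOne, if_pos h.le]

lemma gTwo_neg (hodd : ∀ t, g (-t) = -g t) (t : ℝ) : gTwo g m (-t) = -gTwo g m t := by
  rw [gTwo, gTwo, gOne_neg hodd, hodd, neg_sub_neg, neg_sub]

lemma continuous_gOne (hg : Continuous g) (hg0 : g 0 = 0) : Continuous (gOne g m) :=
  Continuous.if_le ((hg.add (continuous_const.mul continuous_id)).max continuous_const)
    (((hg.comp continuous_neg).add (continuous_const.mul continuous_neg)).max
      continuous_const).neg continuous_const continuous_id
    fun t ht => by simp [← ht, hg0]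

lemma continuous_gTwo (hg : Continuous g) (hg0 : g 0 = 0) : Continuous (gTwo g m) :=
  (continuous_gOne hg hg0).sub hg

lemma exists_forall_Ico_gOne_le_mul_gTwo (hg0 : g 0 = 0) (hm : 0 < m)
    (hlim : limsup (fun t : ℝ => ((g t / t : ℝ) : EReal)) (𝓝[>] 0) ≤ ((-m : ℝ) : EReal))
    {ε : ℝ} (hε : 0 < ε) : ∃ t₀ > 0, ∀ t ∈ Ico 0 t₀, gOne g m t ≤ ε * gTwo g m t := by
  have hlt : ((-m : ℝ) : EReal) < ((-m + ε * m : ℝ) : EReal) := by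
    exact_mod_cast (by nlinarith : -m < -m + ε * m)
  obtain ⟨t₀, ht₀, hsub⟩ := mem_nhdsGT_iff_exists_Ioo_subset.1 <|
    eventually_lt_of_limsup_lt (hlim.trans_lt hlt) (by isBoundedDefault)
  refine ⟨t₀, ht₀, fun t ⟨ht, htt₀⟩ => gOne_le_mul_gTwo hm.le ht hε.le ?_⟩
  rcases ht.eq_or_lt with rfl | htpos
  · simp [hg0]
  · have h : g t / t < -m + ε * m := by exact_mod_cast hsub ⟨htpos, htt₀⟩
    rw [div_lt_iff₀ htpos] at h
    linarith

lemma eventually_gOne_le_mul_rpow {p : ℝ} (hp : 2 ≤ p) (hm : 0 ≤ m)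
    (hlim : Tendsto (fun t : ℝ => |g t| / |t| ^ (p - 1)) atTop (𝓝 0)) :
    ∀ᶠ t in atTop, gOne g m t ≤ (1 + m) * t ^ (p - 1) := by
  filter_upwards [hlim.eventually_lt_const one_pos, eventually_ge_atTop 1] with t hgt ht
  have htpos : 0 < t := by linarith
  rw [abs_of_pos htpos, div_lt_one (Real.rpow_pos_of_pos htpos _)] at hgt
  have hself : t ≤ t ^ (p - 1) := Real.self_le_rpow_of_one_le ht (by linarith)
  nlinarith [gOne_le_abs_add (g := g) hm htpos.le]

lemma exists_gOne_le_mul_gTwo_add_rpow (hg : Continuous g) (hg0 : g 0 = 0) (hm : 0 < m)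
    (hlim₀ : limsup (fun t : ℝ => ((g t / t : ℝ) : EReal)) (𝓝[>] 0) ≤ ((-m : ℝ) : EReal))
    {p : ℝ} (hp : 2 ≤ p) (hlim : Tendsto (fun t : ℝ => |g t| / |t| ^ (p - 1)) atTop (𝓝 0))
    {ε : ℝ} (hε : 0 < ε) : ∃ K > 0, ∀ t ≥ 0, gOne g m t ≤ ε * gTwo g m t + K * t ^ (p - 1) := by
  obtain ⟨t₀, ht₀, hnear⟩ := exists_forall_Ico_gOne_le_mul_gTwo hg0 hm hlim₀ hε
  obtain ⟨K, hK, hfar⟩ := exists_forall_ge_le_mul_rpow_of_eventually_le ht₀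
    (continuous_gOne hg hg0).continuousOn (eventually_gOne_le_mul_rpow hp hm.le hlim)
  refine ⟨K, hK, fun t ht => ?_⟩
  have hpow : 0 ≤ K * t ^ (p - 1) := by positivity
  have hgTwo : 0 ≤ ε * gTwo g m t :=
    mul_nonneg hε.le ((mul_nonneg hm.le ht).trans (mul_le_gTwo ht))
  rcases lt_or_ge t t₀ with h | h
  · linarith [hnear t ⟨ht, h⟩]
  · linarith [hfar t h]

end

lemma integral_le_rpow_add_mul_integral {f₁ f₂ : ℝ → ℝ} {ε K q t : ℝ} (hq : 0 < q) (ht : 0 ≤ t)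
    (hf₁ : IntervalIntegrable f₁ volume 0 t) (hf₂ : IntervalIntegrable f₂ volume 0 t)
    (h : ∀ τ ∈ Icc 0 t, f₁ τ ≤ ε * f₂ τ + K * τ ^ (q - 1)) :
    ∫ τ in (0:ℝ)..t, f₁ τ ≤ K / q * t ^ q + ε * ∫ τ in (0:ℝ)..t, f₂ τ := by
  have hpow : IntervalIntegrable (fun τ => τ ^ (q - 1)) volume 0 t :=
    intervalIntegral.intervalIntegrable_rpow' (by linarith)
  calc ∫ τ in (0:ℝ)..t, f₁ τ ≤ ∫ τ in (0:ℝ)..t, (ε * f₂ τ + K * τ ^ (q - 1)) :=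
        intervalIntegral.integral_mono_on ht hf₁ ((hf₂.const_mul ε).add (hpow.const_mul K)) h
    _ = K / q * t ^ q + ε * ∫ τ in (0:ℝ)..t, f₂ τ := by
        rw [intervalIntegral.integral_add (hf₂.const_mul ε) (hpow.const_mul K),
          intervalIntegral.integral_const_mul, intervalIntegral.integral_const_mul,
          integral_rpow (Or.inl (by linarith)), sub_add_cancel, Real.zero_rpow hq.ne']
        ring

theorem bigGOne_le_of_bigGTwo_general
    (N : ℕ) (s : ℝ) (hs : s ∈ Set.Ioo (0:ℝ) 1) (hNs : 2 * s < N)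
    (g : ℝ → ℝ) (m : ℝ)
-- (g1)
    (hg1 : ContDiff ℝ 1 g) (hodd : ∀ t, g (-t) = -g t)
    -- (g2)
    (hm : 0 < m)
    (hg2c : Filter.limsup (fun t : ℝ => ((g t / t : ℝ) : EReal)) (𝓝[>] (0:ℝ))
        = ((-m : ℝ) : EReal))
-- (g3)
    (hg3top : Tendsto (fun t : ℝ => |g t| / |t| ^ (2 * (N:ℝ) / ((N:ℝ) - 2*s) - 1))
        atTop (𝓝 0)) :
    ∀ ε : ℝ, 0 < ε → ∃ C : ℝ, 0 < C ∧ ∀ t : ℝ,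
      (∫ τ in (0:ℝ)..t, gOne g m τ) ≤
        C * |t| ^ (2 * (N:ℝ) / ((N:ℝ) - 2*s)) + ε * ∫ τ in (0:ℝ)..t, gTwo g m τ := by
  intro ε hε
  set p : ℝ := 2 * (N:ℝ) / ((N:ℝ) - 2*s)
  have hp : 2 ≤ p := by
    rw [le_div_iff₀ (by linarith)]
    nlinarith [hs.1]
  have hg0 : g 0 = 0 := self_eq_neg.1 (by simpa using hodd 0)
  obtain ⟨K, hK, hbound⟩ :=
    exists_gOne_le_mul_gTwo_add_rpow hg1.continuous hg0 hm hg2c.le hp hg3top hε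
  have hnonneg : ∀ t ≥ 0, ∫ τ in (0:ℝ)..t, gOne g m τ ≤
      K / p * |t| ^ p + ε * ∫ τ in (0:ℝ)..t, gTwo g m τ := fun t ht => by
    rw [abs_of_nonneg ht]
    exact integral_le_rpow_add_mul_integral (by linarith) ht
      ((continuous_gOne hg1.continuous hg0).intervalIntegrable _ _)
      ((continuous_gTwo hg1.continuous hg0).intervalIntegrable _ _) fun τ hτ => hbound τ hτ.1
  refine ⟨K / p, div_pos hK (by linarith), fun t => ?_⟩
  rcases le_total 0 t with ht | ht
  · exact hnonneg t ht
  · simpa only [neg_neg, abs_neg, intervalIntegral_zero_neg_of_odd (gOne_neg hodd),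
      intervalIntegral_zero_neg_of_odd (gTwo_neg hodd)] using hnonneg (-t) (neg_nonneg.2 ht)

/-- for every `ε > 0` there is `C_ε > 0` with
`G₁(t) ≤ C_ε |t|^{2*_s} + ε G₂(t)` for all `t ∈ ℝ`. -/
theorem bigGOne_le_of_bigGTwo
    (N : ℕ) (s : ℝ) (hs : s ∈ Set.Ioo (0:ℝ) 1) (hNs : 2 * s < N)
    (g : ℝ → ℝ) (m : ℝ)
-- (g1)
    (hg1 : ContDiff ℝ 1 g) (hodd : ∀ t, g (-t) = -g t)
    -- (g2)
    (hm : 0 < m)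
    (hg2a : ⊥ < Filter.liminf (fun t : ℝ => ((g t / t : ℝ) : EReal)) (𝓝[>] (0:ℝ)))
    (hg2b : Filter.liminf (fun t : ℝ => ((g t / t : ℝ) : EReal)) (𝓝[>] (0:ℝ)) ≤
        Filter.limsup (fun t : ℝ => ((g t / t : ℝ) : EReal)) (𝓝[>] (0:ℝ)))
    (hg2c : Filter.limsup (fun t : ℝ => ((g t / t : ℝ) : EReal)) (𝓝[>] (0:ℝ))
        = ((-m : ℝ) : EReal))
-- (g3)
    (hg3top : Tendsto (fun t : ℝ => |g t| / |t| ^ (2 * (N:ℝ) / ((N:ℝ) - 2*s) - 1))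
        atTop (𝓝 0))
    (hg3bot : Tendsto (fun t : ℝ => |g t| / |t| ^ (2 * (N:ℝ) / ((N:ℝ) - 2*s) - 1))
        atBot (𝓝 0)) :
    ∀ ε : ℝ, 0 < ε → ∃ C : ℝ, 0 < C ∧ ∀ t : ℝ,
      (∫ τ in (0:ℝ)..t, gOne g m τ) ≤
        C * |t| ^ (2 * (N:ℝ) / ((N:ℝ) - 2*s)) + ε * ∫ τ in (0:ℝ)..t, gTwo g m τ :=
  bigGOne_le_of_bigGTwo_general N s hs hNs g m hg1 hodd hm hg2c hg3top
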